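/- arXiv:1803.08106 — 2 statements merged into one kernel-verified Lean document; each statement's English description precedes it below -/
import Mathlib

section
/- Let Ω ⊆ ℝ^d be a nonempty open set, A¹,…,A^d C¹ k×k-matrix-valued functions on Ω with Aʲ(x) Hermitian for all x, and D₀ = Σⱼ ½(AʲDⱼ + DⱼAʲ) with domain C₀¹(Ω)^k in L²(Ω)^k. Suppose Ψ ∈ L²(Ω)^k and there exists Ξ ∈ L²(Ω)^k such that for every open Ω′ compactly contained in Ω there is a sequence (Φₙ) ⊂ C₀¹(Ω)^k with ‖(Φₙ − Ψ)χ_{Ω′}‖ → 0 and ‖(D₀Φₙ − Ξ)χ_{Ω′}‖ → 0. Then ⟪D₀Φ, Ψ⟫ = ⟪Φ, Ξ⟫ for all Φ ∈ C₀¹(Ω)^k; in particular Ψ ∈ D(D₀*) and D₀*Ψ = Ξ. -/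
open MeasureTheory Matrix Set ComplexOrder Filter ENNReal

noncomputable section

/-- `Φ ∈ C₀¹(Ω)^k`: the compactly supported `C¹` functions `Ω → ℂ^k`
(realized as `C¹` functions on `ℝ^d` whose (closed) support is a compact subset of `Ω`). -/
def IsC01 {d k : ℕ} (Ω : Set (Fin d → ℝ)) (Φ : (Fin d → ℝ) → (Fin k → ℂ)) : Prop :=
  ContDiff ℝ 1 Φ ∧ HasCompactSupport Φ ∧ tsupport Φ ⊆ Ω

/-- The `j`-th partial derivative `∂_j`. -/
def pd {d : ℕ} {F : Type*} [NormedAddCommGroup F] [NormedSpace ℝ F]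
    (j : Fin d) (Φ : (Fin d → ℝ) → F) (x : Fin d → ℝ) : F :=
  fderiv ℝ Φ x (Pi.single j 1)

/-- The first order differential operator `D₀ = Σ_j ½ (Aʲ D_j + D_j Aʲ)`, `D_j = -i ∂_j`. -/
def opD0 {d k : ℕ} (A : Fin d → (Fin d → ℝ) → Matrix (Fin k) (Fin k) ℂ)
    (Φ : (Fin d → ℝ) → (Fin k → ℂ)) : (Fin d → ℝ) → (Fin k → ℂ) := fun x =>
  ∑ j, (-(Complex.I) / 2) • ((A j x) *ᵥ pd j Φ x + pd j (fun y => (A j y) *ᵥ Φ y) x)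

/-- The `L²` inner product `⟪Φ, Ψ⟫ = ∫ ⟨Φ(x), Ψ(x)⟩ dx`. -/
def l2inner {d k : ℕ} (Φ Ψ : (Fin d → ℝ) → (Fin k → ℂ)) : ℂ :=
  ∫ x, star (Φ x) ⬝ᵥ Ψ x

/-- The squared `L²` norm `‖Θ‖²`. -/
def l2Sq {d k : ℕ} (Θ : (Fin d → ℝ) → (Fin k → ℂ)) : ℝ :=
  ∫ x, ∑ i, ‖Θ x i‖ ^ 2

/-- The squared `L²` norm of `Θ · χ_s`. -/
def l2SqOn {d k : ℕ} (s : Set (Fin d → ℝ)) (Θ : (Fin d → ℝ) → (Fin k → ℂ)) : ℝ :=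
  ∫ x in s, ∑ i, ‖Θ x i‖ ^ 2

/-- `Ψ ∈ L²(Ω)^k`: square integrable, vanishing outside `Ω`. -/
def IsL2 {d k : ℕ} (Ω : Set (Fin d → ℝ)) (Ψ : (Fin d → ℝ) → (Fin k → ℂ)) : Prop :=
  MeasureTheory.MemLp Ψ 2 volume ∧ ∀ x ∉ Ω, Ψ x = 0

/-!
Integrating by parts, D₀ is symmetric on `C₀¹(Ω)^k`: where the `Aʲ` are Hermitian,
`⟨D₀Φ, Φ'⟩ - ⟨Φ, D₀Φ'⟩ = (i/2) ∑ⱼ ∂ⱼ Jⱼ` pointwise for the current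
`Jⱼ = ⟨AʲΦ, Φ'⟩ + ⟨Φ, AʲΦ'⟩`, and the integral of a derivative of a compactly supported
`C¹` function vanishes. Given `Φ`, choose a compact `K ⊆ Ω` whose interior `Ω'` contains the
support of `Φ`, and take the approximating sequence `Φₙ` on `Ω'`. As `Φ` and `D₀Φ` vanish off `Ω'`,
Cauchy–Schwarz on `Ω'` gives `⟪D₀Φ, Φₙ⟫ → ⟪D₀Φ, Ψ⟫` and `⟪Φ, D₀Φₙ⟫ → ⟪Φ, Ξ⟫`,
and the two sequences coincide by symmetry.
-/

open scoped InnerProductSpace Topology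

section L2

variable {α : Type*} [MeasurableSpace α] {μ : Measure α}
  {𝕜 E : Type*} [RCLike 𝕜] [NormedAddCommGroup E] [InnerProductSpace 𝕜 E] {f g : α → E}

lemma integrable_inner_of_memLp_two (hf : MemLp f 2 μ) (hg : MemLp g 2 μ) :
    Integrable (fun x => ⟪f x, g x⟫_𝕜) μ :=
  (hf.norm.integrable_mul hg.norm).mono' (hf.1.inner hg.1)
    (Eventually.of_forall fun _ => norm_inner_le_norm _ _)

lemma norm_integral_inner_le_sqrt_mul_sqrt (hf : MemLp f 2 μ) (hg : MemLp g 2 μ) :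
    ‖∫ x, ⟪f x, g x⟫_𝕜 ∂μ‖ ≤ √(∫ x, ‖f x‖ ^ 2 ∂μ) * √(∫ x, ‖g x‖ ^ 2 ∂μ) := by
  have hf' : MemLp f (ENNReal.ofReal 2) μ := by simpa using hf
  have hg' : MemLp g (ENNReal.ofReal 2) μ := by simpa using hg
  calc ‖∫ x, ⟪f x, g x⟫_𝕜 ∂μ‖ ≤ ∫ x, ‖⟪f x, g x⟫_𝕜‖ ∂μ := norm_integral_le_integral_norm _
    _ ≤ ∫ x, ‖f x‖ * ‖g x‖ ∂μ :=
      integral_mono_of_nonneg (Eventually.of_forall fun _ => norm_nonneg _)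
        (hf.norm.integrable_mul hg.norm) (Eventually.of_forall fun _ => norm_inner_le_norm _ _)
    _ ≤ (∫ x, ‖f x‖ ^ (2:ℝ) ∂μ) ^ (1 / 2 : ℝ) * (∫ x, ‖g x‖ ^ (2:ℝ) ∂μ) ^ (1 / 2 : ℝ) :=
      integral_mul_norm_le_Lp_mul_Lq .two_two hf' hg'
    _ = √(∫ x, ‖f x‖ ^ 2 ∂μ) * √(∫ x, ‖g x‖ ^ 2 ∂μ) := by
      simp only [Real.rpow_two, Real.sqrt_eq_rpow]

end L2

section StarDotProduct

variable {α : Type*} [MeasurableSpace α] {μ : Measure α} {𝕜 ι : Type*} [RCLike 𝕜] [Fintype ι]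
  {f g : α → ι → 𝕜}

lemma star_dotProduct_eq_inner (a b : ι → 𝕜) :
    star a ⬝ᵥ b = ⟪WithLp.toLp 2 a, WithLp.toLp 2 b⟫_𝕜 := by
  rw [EuclideanSpace.inner_toLp_toLp, dotProduct_comm]

lemma sum_norm_sq_eq_norm_toLp_sq (a : ι → 𝕜) : ∑ i, ‖a i‖ ^ 2 = ‖WithLp.toLp 2 a‖ ^ 2 := by
  simp [EuclideanSpace.norm_sq_eq]

lemma MeasureTheory.MemLp.toEuclidean {p : ℝ≥0∞} (hf : MemLp f p μ) :
    MemLp (fun x => WithLp.toLp 2 (f x)) p μ :=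
  (EuclideanSpace.equiv ι 𝕜).symm.toContinuousLinearMap.comp_memLp' hf

lemma integrable_star_dotProduct (hf : MemLp f 2 μ) (hg : MemLp g 2 μ) :
    Integrable (fun x => star (f x) ⬝ᵥ g x) μ := by
  simpa only [star_dotProduct_eq_inner] using
    integrable_inner_of_memLp_two hf.toEuclidean hg.toEuclidean

lemma norm_integral_star_dotProduct_le (hf : MemLp f 2 μ) (hg : MemLp g 2 μ) :
    ‖∫ x, star (f x) ⬝ᵥ g x ∂μ‖ ≤
      √(∫ x, ∑ i, ‖f x i‖ ^ 2 ∂μ) * √(∫ x, ∑ i, ‖g x i‖ ^ 2 ∂μ) := by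
  simpa only [star_dotProduct_eq_inner, sum_norm_sq_eq_norm_toLp_sq] using
    norm_integral_inner_le_sqrt_mul_sqrt hf.toEuclidean hg.toEuclidean

end StarDotProduct

section Calculus

theorem ContDiffOn.contDiff_of_tsupport_subset {𝕜 E F : Type*} [NontriviallyNormedField 𝕜]
    [NormedAddCommGroup E] [NormedSpace 𝕜 E] [NormedAddCommGroup F] [NormedSpace 𝕜 F]
    {n : WithTop ℕ∞} {f : E → F} {U : Set E} (hf : ContDiffOn 𝕜 n f U) (hU : IsOpen U)
    (hsupp : tsupport f ⊆ U) : ContDiff 𝕜 n f := by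
  refine contDiff_iff_contDiffAt.2 fun x => ?_
  by_cases hx : x ∈ U
  · exact hf.contDiffAt (hU.mem_nhds hx)
  · exact contDiffAt_const.congr_of_eventuallyEq
      (notMem_tsupport_iff_eventuallyEq.1 fun h => hx (hsupp h))

theorem ContDiffOn.matrix_mulVec {E 𝔸 : Type*} [NormedAddCommGroup E] [NormedSpace ℝ E]
    [NormedCommRing 𝔸] [NormedAlgebra ℝ 𝔸] {m l : Type*} [Fintype m] [Fintype l]
    {n : WithTop ℕ∞} {s : Set E} {M : E → Matrix m l 𝔸} {v : E → l → 𝔸}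
    (hM : ∀ i j, ContDiffOn ℝ n (fun x => M x i j) s) (hv : ContDiffOn ℝ n v s) :
    ContDiffOn ℝ n (fun x => M x *ᵥ v x) s :=
  contDiffOn_pi.2 fun i => ContDiffOn.sum fun j _ => (hM i j).mul (contDiffOn_pi.1 hv j)

variable {d : ℕ} {F : Type*} [NormedAddCommGroup F] [NormedSpace ℝ F]

lemma pd_eq_zero_of_notMem_tsupport (j : Fin d) {f : (Fin d → ℝ) → F} {x : Fin d → ℝ}
    (hx : x ∉ tsupport f) : pd j f x = 0 := by
  simp [pd, fderiv_of_notMem_tsupport ℝ hx]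

lemma pd_add (j : Fin d) {f g : (Fin d → ℝ) → F} {x : Fin d → ℝ}
    (hf : DifferentiableAt ℝ f x) (hg : DifferentiableAt ℝ g x) :
    pd j (fun y => f y + g y) x = pd j f x + pd j g x := by
  simp [pd, fderiv_fun_add hf hg]

lemma continuous_pd (j : Fin d) {f : (Fin d → ℝ) → F} (hf : ContDiff ℝ 1 f) :
    Continuous (pd j f) :=
  (hf.continuous_fderiv one_ne_zero).clm_apply continuous_const

lemma HasCompactSupport.pd (j : Fin d) {f : (Fin d → ℝ) → F} (hf : HasCompactSupport f) :
    HasCompactSupport (pd j f) :=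
  hf.mono' fun _ hx => hx.imp_symm (pd_eq_zero_of_notMem_tsupport j)

lemma integral_pd_eq_zero (j : Fin d) {f : (Fin d → ℝ) → F} (hf : ContDiff ℝ 1 f)
    (hfs : HasCompactSupport f) : ∫ x, pd j f x = 0 := by
  have hint : Integrable f := hf.continuous.integrable_of_hasCompactSupport hfs
  have hint' : Integrable (pd j f) :=
    (continuous_pd j hf).integrable_of_hasCompactSupport (hfs.pd j)
  have hparts := integral_smul_fderiv_eq_neg_fderiv_smul_of_integrable (μ := volume)
    (f := fun _ => (1 : ℝ)) (g := f) (v := Pi.single j 1) (by simp)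
    (by simp only [one_smul]; exact hint') (by simpa using hint)
    (fun _ _ => differentiableAt_const _) (fun x _ => hf.differentiable one_ne_zero x)
  simpa [pd] using hparts

variable {𝕜 ι : Type*} [RCLike 𝕜] [Fintype ι]

lemma DifferentiableAt.star_dotProduct {u w : (Fin d → ℝ) → ι → 𝕜} {x : Fin d → ℝ}
    (hu : DifferentiableAt ℝ u x) (hw : DifferentiableAt ℝ w x) :
    DifferentiableAt ℝ (fun y => star (u y) ⬝ᵥ w y) x := by
  let e := (PiLp.continuousLinearEquiv 2 ℝ fun _ : ι => 𝕜).symm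
  simp only [star_dotProduct_eq_inner]
  exact (e.differentiableAt.comp x hu).inner 𝕜 (e.differentiableAt.comp x hw)

lemma ContDiff.star_dotProduct {n : WithTop ℕ∞} {u w : (Fin d → ℝ) → ι → 𝕜}
    (hu : ContDiff ℝ n u) (hw : ContDiff ℝ n w) :
    ContDiff ℝ n (fun y => star (u y) ⬝ᵥ w y) := by
  let e := (PiLp.continuousLinearEquiv 2 ℝ fun _ : ι => 𝕜).symm
  simp only [star_dotProduct_eq_inner]
  exact (e.contDiff.comp hu).inner 𝕜 (e.contDiff.comp hw)

lemma pd_star_dotProduct (j : Fin d) {u w : (Fin d → ℝ) → ι → 𝕜} {x : Fin d → ℝ}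
    (hu : DifferentiableAt ℝ u x) (hw : DifferentiableAt ℝ w x) :
    pd j (fun y => star (u y) ⬝ᵥ w y) x = star (pd j u x) ⬝ᵥ w x + star (u x) ⬝ᵥ pd j w x := by
  let e := (PiLp.continuousLinearEquiv 2 ℝ fun _ : ι => 𝕜).symm
  have h := fderiv_inner_apply 𝕜 (e.differentiableAt.comp x hu) (e.differentiableAt.comp x hw)
    (Pi.single j 1)
  rw [e.comp_fderiv, e.comp_fderiv] at h
  simp only [pd, star_dotProduct_eq_inner]
  rw [add_comm]
  exact h

end Calculus

section Operator

variable {d k : ℕ} {Ω : Set (Fin d → ℝ)} {A : Fin d → (Fin d → ℝ) → Matrix (Fin k) (Fin k) ℂ}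

lemma tsupport_mulVec_subset (A : (Fin d → ℝ) → Matrix (Fin k) (Fin k) ℂ)
    (Φ : (Fin d → ℝ) → Fin k → ℂ) : tsupport (fun y => A y *ᵥ Φ y) ⊆ tsupport Φ :=
  closure_mono fun y hy h0 => hy (by simp [h0])

lemma opD0_eq_zero_of_notMem_tsupport {Φ : (Fin d → ℝ) → Fin k → ℂ} {x : Fin d → ℝ}
    (hx : x ∉ tsupport Φ) : opD0 A Φ x = 0 := by
  simp [opD0, pd_eq_zero_of_notMem_tsupport _ hx,
    pd_eq_zero_of_notMem_tsupport _ fun h => hx (tsupport_mulVec_subset _ Φ h)]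

lemma tsupport_opD0_subset (Φ : (Fin d → ℝ) → Fin k → ℂ) : tsupport (opD0 A Φ) ⊆ tsupport Φ :=
  closure_minimal (fun _ hx => hx.imp_symm opD0_eq_zero_of_notMem_tsupport) (isClosed_tsupport Φ)

namespace IsC01

variable {Φ : (Fin d → ℝ) → Fin k → ℂ}

lemma memLp (hΦ : IsC01 Ω Φ) (p : ℝ≥0∞) : MemLp Φ p volume :=
  hΦ.1.continuous.memLp_of_hasCompactSupport hΦ.2.1

lemma hasCompactSupport_opD0 (hΦ : IsC01 Ω Φ) : HasCompactSupport (opD0 A Φ) :=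
  hΦ.2.1.mono' ((subset_tsupport _).trans (tsupport_opD0_subset Φ))

lemma contDiff_mulVec (hΩ : IsOpen Ω)
    (hAreg : ∀ (m : Fin d) (i j : Fin k), ContDiffOn ℝ 1 (fun x => A m x i j) Ω)
    (hΦ : IsC01 Ω Φ) (m : Fin d) : ContDiff ℝ 1 (fun y => A m y *ᵥ Φ y) :=
  (ContDiffOn.matrix_mulVec (hAreg m) hΦ.1.contDiffOn).contDiff_of_tsupport_subset hΩ
    ((tsupport_mulVec_subset _ Φ).trans hΦ.2.2)

lemma continuous_opD0 (hΩ : IsOpen Ω)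
    (hAreg : ∀ (m : Fin d) (i j : Fin k), ContDiffOn ℝ 1 (fun x => A m x i j) Ω)
    (hΦ : IsC01 Ω Φ) : Continuous (opD0 A Φ) := by
  refine ContinuousOn.continuous_of_tsupport_subset ?_ hΩ ((tsupport_opD0_subset Φ).trans hΦ.2.2)
  refine continuousOn_finsetSum _ fun m _ => (ContinuousOn.add ?_ ?_).fun_const_smul _
  · rw [continuousOn_iff_continuous_domRestrict]
    exact (continuous_matrix fun i j => (hAreg m i j).continuousOn.domRestrict).matrix_mulVec
      ((continuous_pd m hΦ.1).comp continuous_subtype_val)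
  · exact (continuous_pd m (hΦ.contDiff_mulVec hΩ hAreg m)).continuousOn

lemma memLp_opD0 (hΩ : IsOpen Ω)
    (hAreg : ∀ (m : Fin d) (i j : Fin k), ContDiffOn ℝ 1 (fun x => A m x i j) Ω)
    (hΦ : IsC01 Ω Φ) (p : ℝ≥0∞) : MemLp (opD0 A Φ) p volume :=
  (hΦ.continuous_opD0 hΩ hAreg).memLp_of_hasCompactSupport hΦ.hasCompactSupport_opD0

end IsC01

end Operator

section Symmetry

variable {d k : ℕ} {Ω : Set (Fin d → ℝ)} {A : Fin d → (Fin d → ℝ) → Matrix (Fin k) (Fin k) ℂ}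

lemma Matrix.IsHermitian.star_mulVec_dotProduct {n α : Type*} [Fintype n] [CommRing α]
    [StarRing α] {M : Matrix n n α} (hM : M.IsHermitian) (a b : n → α) :
    star (M *ᵥ a) ⬝ᵥ b = star a ⬝ᵥ (M *ᵥ b) := by
  rw [star_mulVec, hM.eq, dotProduct_mulVec]

def opD0Current (A : Fin d → (Fin d → ℝ) → Matrix (Fin k) (Fin k) ℂ)
    (Φ Φ' : (Fin d → ℝ) → Fin k → ℂ) (j : Fin d) : (Fin d → ℝ) → ℂ :=
  fun y => star (A j y *ᵥ Φ y) ⬝ᵥ Φ' y + star (Φ y) ⬝ᵥ (A j y *ᵥ Φ' y)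

lemma star_opD0_dotProduct_sub_eq_sum_pd {Φ Φ' : (Fin d → ℝ) → Fin k → ℂ} {x : Fin d → ℝ}
    (hA : ∀ j, (A j x).IsHermitian)
    (hΦ : DifferentiableAt ℝ Φ x) (hΦ' : DifferentiableAt ℝ Φ' x)
    (hAΦ : ∀ j, DifferentiableAt ℝ (fun y => A j y *ᵥ Φ y) x)
    (hAΦ' : ∀ j, DifferentiableAt ℝ (fun y => A j y *ᵥ Φ' y) x) :
    star (opD0 A Φ x) ⬝ᵥ Φ' x - star (Φ x) ⬝ᵥ opD0 A Φ' x =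
      ∑ j, (Complex.I / 2) * pd j (opD0Current A Φ Φ' j) x := by
  have hpd : ∀ j, pd j (opD0Current A Φ Φ' j) x =
      star (pd j (fun y => A j y *ᵥ Φ y) x) ⬝ᵥ Φ' x + star (Φ x) ⬝ᵥ (A j x *ᵥ pd j Φ' x) +
      (star (A j x *ᵥ pd j Φ x) ⬝ᵥ Φ' x + star (Φ x) ⬝ᵥ pd j (fun y => A j y *ᵥ Φ' y) x) := by
    intro j
    unfold opD0Current
    rw [pd_add j ((hAΦ j).star_dotProduct hΦ') (hΦ.star_dotProduct (hAΦ' j)),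
      pd_star_dotProduct j (hAΦ j) hΦ', pd_star_dotProduct j hΦ (hAΦ' j),
      (hA j).star_mulVec_dotProduct (Φ x), (hA j).star_mulVec_dotProduct (pd j Φ x)]
  simp only [opD0, hpd, star_sum, sum_dotProduct, dotProduct_sum, star_smul, smul_dotProduct,
    dotProduct_smul, star_add, add_dotProduct, dotProduct_add, smul_eq_mul, Complex.star_def,
    map_div₀, map_neg, Complex.conj_I, Complex.conj_ofNat, ← Finset.sum_sub_distrib]
  refine Finset.sum_congr rfl fun j _ => ?_
  ring

lemma tsupport_opD0Current_subset (Φ Φ' : (Fin d → ℝ) → Fin k → ℂ) (j : Fin d) :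
    tsupport (opD0Current A Φ Φ' j) ⊆ tsupport Φ :=
  closure_mono fun y hy h0 => hy (by simp [opD0Current, h0])

lemma l2inner_opD0_comm (hΩ : IsOpen Ω)
    (hAreg : ∀ (m : Fin d) (i j : Fin k), ContDiffOn ℝ 1 (fun x => A m x i j) Ω)
    (hA : ∀ (m : Fin d), ∀ x ∈ Ω, (A m x).IsHermitian)
    {Φ Φ' : (Fin d → ℝ) → Fin k → ℂ} (hΦ : IsC01 Ω Φ) (hΦ' : IsC01 Ω Φ') :
    l2inner (opD0 A Φ) Φ' = l2inner Φ (opD0 A Φ') := by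
  have hcurrent : ∀ j, ContDiff ℝ 1 (opD0Current A Φ Φ' j) := fun j =>
    ((hΦ.contDiff_mulVec hΩ hAreg j).star_dotProduct hΦ'.1).add
      (hΦ.1.star_dotProduct (hΦ'.contDiff_mulVec hΩ hAreg j))
  have hcurrent_supp : ∀ j, HasCompactSupport (opD0Current A Φ Φ' j) := fun j =>
    hΦ.2.1.mono' ((subset_tsupport _).trans (tsupport_opD0Current_subset Φ Φ' j))
  have hpointwise : ∀ x, star (opD0 A Φ x) ⬝ᵥ Φ' x - star (Φ x) ⬝ᵥ opD0 A Φ' x =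
      ∑ j, (Complex.I / 2) * pd j (opD0Current A Φ Φ' j) x := by
    intro x
    by_cases hx : x ∈ Ω
    · exact star_opD0_dotProduct_sub_eq_sum_pd (fun j => hA j x hx)
        (hΦ.1.differentiable one_ne_zero x) (hΦ'.1.differentiable one_ne_zero x)
        (fun j => (hΦ.contDiff_mulVec hΩ hAreg j).differentiable one_ne_zero x)
        (fun j => (hΦ'.contDiff_mulVec hΩ hAreg j).differentiable one_ne_zero x)
    · have hxΦ : x ∉ tsupport Φ := fun h => hx (hΦ.2.2 h)
      have hxΦ' : x ∉ tsupport Φ' := fun h => hx (hΦ'.2.2 h)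
      simp [image_eq_zero_of_notMem_tsupport hxΦ, image_eq_zero_of_notMem_tsupport hxΦ',
        pd_eq_zero_of_notMem_tsupport _ fun h => hxΦ (tsupport_opD0Current_subset Φ Φ' _ h)]
  rw [← sub_eq_zero, l2inner, l2inner,
    ← integral_sub (integrable_star_dotProduct (hΦ.memLp_opD0 hΩ hAreg 2) (hΦ'.memLp 2))
      (integrable_star_dotProduct (hΦ.memLp 2) (hΦ'.memLp_opD0 hΩ hAreg 2)),
    funext hpointwise, integral_finsetSum _ fun j _ =>
      ((continuous_pd j (hcurrent j)).integrable_of_hasCompactSupport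
        ((hcurrent_supp j).pd j)).const_mul _]
  exact Finset.sum_eq_zero fun j _ => by
    rw [integral_const_mul, integral_pd_eq_zero j (hcurrent j) (hcurrent_supp j), mul_zero]

end Symmetry

section Approximation

variable {d k : ℕ}

lemma tendsto_l2inner_of_tendsto_l2SqOn {s : Set (Fin d → ℝ)} {G F : (Fin d → ℝ) → Fin k → ℂ}
    {Fs : ℕ → (Fin d → ℝ) → Fin k → ℂ} (hGs : ∀ x ∉ s, G x = 0)
    (hG : MemLp G 2 (volume.restrict s)) (hF : MemLp F 2 (volume.restrict s))
    (hFs : ∀ n, MemLp (Fs n) 2 (volume.restrict s))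
    (hlim : Tendsto (fun n => l2SqOn s (fun x => Fs n x - F x)) atTop (𝓝 0)) :
    Tendsto (fun n => l2inner G (Fs n)) atTop (𝓝 (l2inner G F)) := by
  have hrestrict : ∀ w : (Fin d → ℝ) → Fin k → ℂ, l2inner G w = ∫ x in s, star (G x) ⬝ᵥ w x :=
    fun w => (setIntegral_eq_integral_of_forall_compl_eq_zero fun x hx => by simp [hGs x hx]).symm
  have hbound : ∀ n, ‖l2inner G (Fs n) - l2inner G F‖ ≤
      √(l2SqOn s G) * √(l2SqOn s fun x => Fs n x - F x) := by
    intro n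
    rw [hrestrict, hrestrict, ← integral_sub (integrable_star_dotProduct hG (hFs n))
      (integrable_star_dotProduct hG hF)]
    simpa only [dotProduct_sub, l2SqOn, Pi.sub_apply] using
      norm_integral_star_dotProduct_le hG ((hFs n).sub hF)
  rw [tendsto_iff_norm_sub_tendsto_zero]
  refine squeeze_zero (fun n => norm_nonneg _) hbound ?_
  simpa using hlim.sqrt.const_mul √(l2SqOn s G)

end Approximation

theorem strong_extension_le_weak_general
    {d k : ℕ} (Ω : Set (Fin d → ℝ)) (hΩ : IsOpen Ω)
    (A : Fin d → (Fin d → ℝ) → Matrix (Fin k) (Fin k) ℂ)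
    (hAreg : ∀ (m : Fin d) (i j : Fin k), ContDiffOn ℝ 1 (fun x => A m x i j) Ω)
    (hA : ∀ (m : Fin d), ∀ x ∈ Ω, (A m x).IsHermitian)
    (Ψ Ξ : (Fin d → ℝ) → (Fin k → ℂ)) (hΨ : IsL2 Ω Ψ) (hΞ : IsL2 Ω Ξ)
    (happrox : ∀ Ω' : Set (Fin d → ℝ), IsOpen Ω' → (∃ K, IsCompact K ∧ Ω' ⊆ K ∧ K ⊆ Ω) →
      ∃ Φs : ℕ → (Fin d → ℝ) → (Fin k → ℂ), (∀ n, IsC01 Ω (Φs n)) ∧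
        Tendsto (fun n => l2SqOn Ω' (fun x => Φs n x - Ψ x)) atTop (nhds 0) ∧
        Tendsto (fun n => l2SqOn Ω' (fun x => opD0 A (Φs n) x - Ξ x)) atTop (nhds 0)) :
    ∀ Φ, IsC01 Ω Φ → l2inner (opD0 A Φ) Ψ = l2inner Φ Ξ := by
  intro Φ hΦ
  obtain ⟨K, hK, hΦK, hKΩ⟩ := exists_compact_between hΦ.2.1 hΩ hΦ.2.2
  obtain ⟨Φs, hΦs, hlimΨ, hlimΞ⟩ :=
    happrox (interior K) isOpen_interior ⟨K, hK, interior_subset, hKΩ⟩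
  have hvanish : ∀ {G : (Fin d → ℝ) → Fin k → ℂ}, tsupport G ⊆ tsupport Φ →
      ∀ x ∉ interior K, G x = 0 := fun hG x hx =>
    image_eq_zero_of_notMem_tsupport fun h => hx (hΦK (hG h))
  have hD0Ψ := tendsto_l2inner_of_tendsto_l2SqOn (hvanish (tsupport_opD0_subset Φ))
    ((hΦ.memLp_opD0 hΩ hAreg 2).restrict _) (hΨ.1.restrict _)
    (fun n => ((hΦs n).memLp 2).restrict _) hlimΨ
  have hΦΞ := tendsto_l2inner_of_tendsto_l2SqOn (hvanish subset_rfl)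
    ((hΦ.memLp 2).restrict _) (hΞ.1.restrict _)
    (fun n => ((hΦs n).memLp_opD0 hΩ hAreg 2).restrict _) hlimΞ
  exact tendsto_nhds_unique
    (hD0Ψ.congr fun n => l2inner_opD0_comm hΩ hAreg hA hΦ (hΦs n)) hΦΞ

/-- **If `Ψ ∈ 𝓕` with strong limit `Ξ`, then `⟪D₀Φ,Ψ⟫ = ⟪Φ,Ξ⟫` for all `Φ ∈ C₀¹(Ω)^k`;
in particular `Ψ ∈ D(D₀*)` and `D₀*Ψ = Ξ`.** -/
theorem strong_extension_le_weak
    {d k : ℕ} (Ω : Set (Fin d → ℝ)) (hΩ : IsOpen Ω) (hΩne : Ω.Nonempty)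
    (A : Fin d → (Fin d → ℝ) → Matrix (Fin k) (Fin k) ℂ)
    (hAreg : ∀ (m : Fin d) (i j : Fin k), ContDiffOn ℝ 1 (fun x => A m x i j) Ω)
    (hA : ∀ (m : Fin d), ∀ x ∈ Ω, (A m x).IsHermitian)
    (Ψ Ξ : (Fin d → ℝ) → (Fin k → ℂ)) (hΨ : IsL2 Ω Ψ) (hΞ : IsL2 Ω Ξ)
    (happrox : ∀ Ω' : Set (Fin d → ℝ), IsOpen Ω' → (∃ K, IsCompact K ∧ Ω' ⊆ K ∧ K ⊆ Ω) →
      ∃ Φs : ℕ → (Fin d → ℝ) → (Fin k → ℂ), (∀ n, IsC01 Ω (Φs n)) ∧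
        Tendsto (fun n => l2SqOn Ω' (fun x => Φs n x - Ψ x)) atTop (nhds 0) ∧
        Tendsto (fun n => l2SqOn Ω' (fun x => opD0 A (Φs n) x - Ξ x)) atTop (nhds 0)) :
    ∀ Φ, IsC01 Ω Φ → l2inner (opD0 A Φ) Ψ = l2inner Φ Ξ :=
  strong_extension_le_weak_general Ω hΩ A hAreg hA Ψ Ξ hΨ hΞ happrox
end
end

section
/- (Velocity matrix for isotropic acoustic waves.) Let K > 0, μ > 0, and let C be the 6×6 real symmetric matrix whose upper-left 3×3 block has diagonal entries K + 4μ/3 and off-diagonal entries K − 2μ/3, whose lower-right 3×3 block is μI₃, and whose off-diagonal blocks vanish. Let a¹, a², a³ be the 6×3 matrices a¹ = [[1,0,0],[0,0,0],[0,0,0],[0,1,0],[0,0,0],[0,0,1]], a² = [[0,0,0],[0,1,0],[0,0,0],[1,0,0],[0,0,1],[0,0,0]], a³ = [[0,0,0],[0,0,0],[0,0,1],[0,0,0],[0,1,0],[1,0,0]]. Then C is positive definite and for all j, l ∈ {1,2,3}: Tr(C^{1/2}aʲ(C^{1/2}aˡ)ᵀ) = (K + 10μ/3) δ_{jl}. Consequently,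 for any ρ > 0, the velocity matrix M with entries M_{jl} = (2/ρ)Tr(C^{1/2}aʲ(C^{1/2}aˡ)ᵀ) equals 2(v_P² + 2v_S²)I₃, where v_P² = (K + 4μ/3)/ρ and v_S² = μ/ρ. -/
open Matrix

noncomputable section

section

open scoped ComplexOrder

/-- The positive semidefinite square root of a positive semidefinite matrix
(restored from the older Mathlib, where it was `Matrix.PosSemidef.sqrt`). -/
def Matrix.PosSemidef.sqrt {n 𝕜 : Type*} [Fintype n] [RCLike 𝕜] [DecidableEq n]
    {A : Matrix n n 𝕜} (hA : A.PosSemidef) : Matrix n n 𝕜 :=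
  hA.1.eigenvectorUnitary.1 * diagonal ((↑) ∘ (√·) ∘ hA.1.eigenvalues) *
    (star hA.1.eigenvectorUnitary : Matrix n n 𝕜)

end

/-
Because `C^{1/2}` is symmetric and squares to `C`, cyclicity of the trace gives
`Tr (C^{1/2} aʲ (C^{1/2} aˡ)ᵀ) = Tr (C aʲ (aˡ)ᵀ)`: the square root never has to be computed,
and the traces are a finite computation with the entries of `C`.
Positive definiteness of `C` comes from writing its quadratic form as
`K (x₁ + x₂ + x₃)² + (2μ/3) ∑_{i<j≤3} (xᵢ - xⱼ)² + μ (x₄² + x₅² + x₆²)`.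
-/

namespace Matrix

section Sqrt

open scoped ComplexOrder

variable {n 𝕜 : Type*} [Fintype n] [DecidableEq n] [RCLike 𝕜]

theorem PosSemidef.sqrt_isHermitian {A : Matrix n n 𝕜} (hA : A.PosSemidef) :
    hA.sqrt.IsHermitian := by
  simp [PosSemidef.sqrt, IsHermitian, conjTranspose_mul, Matrix.mul_assoc, star_eq_conjTranspose,
    Function.comp_def, Pi.star_def, RCLike.star_def]

theorem PosSemidef.sqrt_mul_self {A : Matrix n n 𝕜} (hA : A.PosSemidef) :
    hA.sqrt * hA.sqrt = A := by
  set U := hA.1.eigenvectorUnitary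
  have hU : (star U : Matrix n n 𝕜) * U = 1 := Unitary.coe_star_mul_self U
  conv_rhs => rw [hA.1.spectral_theorem]
  simp only [PosSemidef.sqrt, Unitary.conjStarAlgAut_apply, Matrix.mul_assoc]
  rw [← Matrix.mul_assoc (star U : Matrix n n 𝕜), hU, Matrix.one_mul,
    ← Matrix.mul_assoc (diagonal _), diagonal_mul_diagonal]
  congr 3
  funext i
  simp [← RCLike.ofReal_mul, Real.mul_self_sqrt (hA.eigenvalues_nonneg i)]

end Sqrt

theorem IsSymm.trace_mul_mul_transpose_mul {n m R : Type*} [Fintype n] [Fintype m]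
    [CommSemiring R] {S : Matrix n n R} (hS : S.IsSymm) (A B : Matrix n m R) :
    trace (S * A * (S * B)ᵀ) = trace (S * S * (A * Bᵀ)) := by
  rw [transpose_mul, hS.eq, ← Matrix.mul_assoc, trace_mul_comm, ← Matrix.mul_assoc,
    ← Matrix.mul_assoc, Matrix.mul_assoc]

theorem PosSemidef.trace_sqrt_mul_mul_transpose {n m : Type*} [Fintype n] [DecidableEq n]
    [Fintype m] {C : Matrix n n ℝ} (hC : C.PosSemidef) (A B : Matrix n m ℝ) :
    trace (hC.sqrt * A * (hC.sqrt * B)ᵀ) = trace (C * (A * Bᵀ)) := by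
  rw [(isHermitian_iff_isSymm.mp hC.sqrt_isHermitian).trace_mul_mul_transpose_mul,
    hC.sqrt_mul_self]

end Matrix

def isotropicStiffness (K μ : ℝ) : Matrix (Fin 6) (Fin 6) ℝ :=
  !![K + 4 * μ / 3, K - 2 * μ / 3, K - 2 * μ / 3, 0, 0, 0;
     K - 2 * μ / 3, K + 4 * μ / 3, K - 2 * μ / 3, 0, 0, 0;
     K - 2 * μ / 3, K - 2 * μ / 3, K + 4 * μ / 3, 0, 0, 0;
     0, 0, 0, μ, 0, 0;
     0, 0, 0, 0, μ, 0;
     0, 0, 0, 0, 0, μ]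

def voigtStrainMatrix : Fin 3 → Matrix (Fin 6) (Fin 3) ℝ :=
  ![!![1,0,0; 0,0,0; 0,0,0; 0,1,0; 0,0,0; 0,0,1],
    !![0,0,0; 0,1,0; 0,0,0; 1,0,0; 0,0,1; 0,0,0],
    !![0,0,0; 0,0,0; 0,0,1; 0,0,0; 0,1,0; 1,0,0]]

theorem reindex_fromBlocks_eq_isotropicStiffness (K μ : ℝ) :
    reindex finSumFinEquiv finSumFinEquiv
      (fromBlocks (of fun i j : Fin 3 => if i = j then K + 4 * μ / 3 else K - 2 * μ / 3) 0 0
        (μ • (1 : Matrix (Fin 3) (Fin 3) ℝ))) = isotropicStiffness K μ := by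
  ext i j
  fin_cases i <;> fin_cases j <;>
    simp [isotropicStiffness, finSumFinEquiv, Fin.addCases, one_apply]

theorem isotropicStiffness_isSymm (K μ : ℝ) : (isotropicStiffness K μ).IsSymm := by
  ext i j
  fin_cases i <;> fin_cases j <;> rfl

theorem dotProduct_mulVec_isotropicStiffness (K μ : ℝ) (x : Fin 6 → ℝ) :
    x ⬝ᵥ isotropicStiffness K μ *ᵥ x =
      K * (x 0 + x 1 + x 2) ^ 2
        + 2 * μ / 3 * ((x 0 - x 1) ^ 2 + (x 0 - x 2) ^ 2 + (x 1 - x 2) ^ 2)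
        + μ * (x 3 ^ 2 + x 4 ^ 2 + x 5 ^ 2) := by
  simp [isotropicStiffness, dotProduct, mulVec, Fin.sum_univ_succ]
  ring

theorem isotropicStiffness_posDef {K μ : ℝ} (hK : 0 < K) (hμ : 0 < μ) :
    (isotropicStiffness K μ).PosDef := by
  refine .of_dotProduct_mulVec_pos
    (isHermitian_iff_isSymm.mpr (isotropicStiffness_isSymm K μ)) fun x hx => ?_
  rw [star_trivial, dotProduct_mulVec_isotropicStiffness]
  by_contra! hle
  have eq_zero_of_mul_sq_nonpos {c t : ℝ} (hc : 0 < c) (h : c * t ^ 2 ≤ 0) : t = 0 :=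
    (sq_nonpos_iff t).mp (nonpos_of_mul_nonpos_right h hc)
  have hμ' : 0 < 2 * μ / 3 := by positivity
  have hs : x 0 + x 1 + x 2 = 0 := eq_zero_of_mul_sq_nonpos hK (by nlinarith)
  have h01 : x 0 - x 1 = 0 := eq_zero_of_mul_sq_nonpos hμ' (by nlinarith)
  have h02 : x 0 - x 2 = 0 := eq_zero_of_mul_sq_nonpos hμ' (by nlinarith)
  have h3 : x 3 = 0 := eq_zero_of_mul_sq_nonpos hμ (by nlinarith)
  have h4 : x 4 = 0 := eq_zero_of_mul_sq_nonpos hμ (by nlinarith)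
  have h5 : x 5 = 0 := eq_zero_of_mul_sq_nonpos hμ (by nlinarith)
  refine hx (funext fun i => ?_)
  fin_cases i <;> simp <;> linarith

theorem trace_isotropicStiffness_mul_voigtStrainMatrix (K μ : ℝ) (j l : Fin 3) :
    trace (isotropicStiffness K μ * (voigtStrainMatrix j * (voigtStrainMatrix l)ᵀ))
      = (K + 10 * μ / 3) * (if j = l then 1 else 0) := by
  fin_cases j <;> fin_cases l <;>
    simp [isotropicStiffness, voigtStrainMatrix, trace, Fin.sum_univ_succ, vecMul,
      dotProduct] <;> ring

/-- **Velocity matrix for isotropic acoustic waves.** -/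
theorem acoustic_velocity_matrix
    (K μ : ℝ) (hK : 0 < K) (hμ : 0 < μ)
    (C : Matrix (Fin 6) (Fin 6) ℝ)
    (hCdef : C = Matrix.reindex finSumFinEquiv finSumFinEquiv
      (Matrix.fromBlocks
        (Matrix.of fun i j : Fin 3 => if i = j then K + 4 * μ / 3 else K - 2 * μ / 3) 0 0
        (μ • (1 : Matrix (Fin 3) (Fin 3) ℝ))))
    (a : Fin 3 → Matrix (Fin 6) (Fin 3) ℝ)
    (hadef : a = ![!![1,0,0; 0,0,0; 0,0,0; 0,1,0; 0,0,0; 0,0,1],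
                   !![0,0,0; 0,1,0; 0,0,0; 1,0,0; 0,0,1; 0,0,0],
                   !![0,0,0; 0,0,0; 0,0,1; 0,0,0; 0,1,0; 1,0,0]]) :
    ∃ hC : C.PosDef,
      (∀ j l : Fin 3,
        Matrix.trace (hC.posSemidef.sqrt * a j * (hC.posSemidef.sqrt * a l)ᵀ)
          = (K + 10 * μ / 3) * (if j = l then 1 else 0)) ∧
      (∀ ρ : ℝ, 0 < ρ → ∀ j l : Fin 3,
        (2 / ρ) * Matrix.trace (hC.posSemidef.sqrt * a j * (hC.posSemidef.sqrt * a l)ᵀ)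
          = 2 * ((K + 4 * μ / 3) / ρ + 2 * (μ / ρ)) * (if j = l then 1 else 0)) := by
  obtain rfl : C = isotropicStiffness K μ :=
    hCdef.trans (reindex_fromBlocks_eq_isotropicStiffness K μ)
  obtain rfl : a = voigtStrainMatrix := hadef
  have hC := isotropicStiffness_posDef hK hμ
  have htrace := fun j l : Fin 3 =>
    (hC.posSemidef.trace_sqrt_mul_mul_transpose (voigtStrainMatrix j) (voigtStrainMatrix l)).trans
      (trace_isotropicStiffness_mul_voigtStrainMatrix K μ j l)
  refine ⟨hC, htrace, fun ρ _ j l => ?_⟩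
  rw [htrace]
  ring
end
end
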